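/- arXiv:2410.11659 — 5 statements merged into one kernel-verified Lean document; each statement's English description precedes it below -/
import Mathlib

section
/- Let 1 < p < N and μ ∈ ℝ, and define φ(S) = (p-1)|S|^p - (N-p)|S|^{p-2} S - μ. Then φ attains its minimum value μ₀ - μ at S = (N-p)/p, where μ₀ = -((N-p)/p)^p. Consequently φ has a real root if and only if μ ≥ μ₀. -/
/-!
Young's inequality with exponents `p` and `p / (p - 1)` gives
`p c t ^ (p - 1) ≤ (p - 1) t ^ p + c ^ p` for `t, c ≥ 0`, with equality at `t = c`. Taking
`c = (N - p) / p`, this is exactly `φ(S) ≥ μ₀ - μ` for `S > 0`, with equality at `S = c`, while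
for `S ≤ 0` both terms of `φ + μ` are nonnegative. Since `φ` is continuous on `[0, ∞)` and tends to
`+∞`, the intermediate value theorem gives a root as soon as the minimum `μ₀ - μ` is `≤ 0`.
-/

open Filter Set

/-- `φ + μ` with `a = N - p`. -/
noncomputable def rpowProfile (p a S : ℝ) : ℝ :=
  (p - 1) * |S| ^ p - a * (Real.sign S * |S| ^ (p - 1))

lemma young_rpow_sub_one {p t c : ℝ} (hp : 1 < p) (ht : 0 ≤ t) (hc : 0 ≤ c) :
    p * c * t ^ (p - 1) ≤ (p - 1) * t ^ p + c ^ p := by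
  have hp0 : 0 < p := one_pos.trans hp
  have young := Real.young_inequality_of_nonneg (Real.rpow_nonneg ht (p - 1)) hc
    (Real.HolderConjugate.conjExponent hp).symm
  have hpow : (t ^ (p - 1)) ^ Real.conjExponent p = t ^ p := by
    rw [← Real.rpow_mul ht, Real.conjExponent, mul_div_cancel₀ _ (sub_pos.2 hp).ne']
  rw [hpow, Real.conjExponent, div_div_eq_mul_div] at young
  calc p * c * t ^ (p - 1) = p * (t ^ (p - 1) * c) := by ring
    _ ≤ p * (t ^ p * (p - 1) / p + c ^ p / p) := by gcongr
    _ = (p - 1) * t ^ p + c ^ p := by field_simp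

section Profile

variable {p a : ℝ}

lemma rpowProfile_of_nonneg (hp : p ≠ 1) {S : ℝ} (hS : 0 ≤ S) :
    rpowProfile p a S = (p - 1) * S ^ p - a * S ^ (p - 1) := by
  rcases hS.eq_or_lt with rfl | hS
  · simp [rpowProfile, Real.zero_rpow (sub_ne_zero.2 hp)]
  · rw [rpowProfile, Real.sign_of_pos hS, abs_of_pos hS, one_mul]

lemma rpowProfile_div_self (hp : 1 < p) (ha : 0 ≤ a) :
    rpowProfile p a (a / p) = -(a / p) ^ p := by
  have hp0 : 0 < p := one_pos.trans hp
  obtain ⟨c, hc, rfl⟩ : ∃ c, 0 ≤ c ∧ a = p * c :=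
    ⟨a / p, div_nonneg ha hp0.le, (mul_div_cancel₀ a hp0.ne').symm⟩
  have hpow : c ^ p = c * c ^ (p - 1) := by
    rw [← Real.rpow_one_add' hc (by linarith), add_sub_cancel]
  rw [mul_div_cancel_left₀ c hp0.ne', rpowProfile_of_nonneg hp.ne' hc, hpow]
  ring

lemma neg_rpow_le_rpowProfile (hp : 1 < p) (ha : 0 ≤ a) (S : ℝ) :
    -(a / p) ^ p ≤ rpowProfile p a S := by
  have hp0 : 0 < p := one_pos.trans hp
  rcases le_or_gt S 0 with hS | hS
  · have hsign : Real.sign S ≤ 0 := by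
      rcases hS.lt_or_eq with hS | rfl
      · simp [Real.sign_of_neg hS]
      · simp
    have := Real.rpow_nonneg (div_nonneg ha hp0.le) p
    have := mul_nonneg (sub_pos.2 hp).le (Real.rpow_nonneg (abs_nonneg S) p)
    have := mul_nonpos_of_nonpos_of_nonneg hsign (Real.rpow_nonneg (abs_nonneg S) (p - 1))
    have := mul_nonpos_of_nonneg_of_nonpos ha this
    rw [rpowProfile]
    linarith
  · have young := young_rpow_sub_one hp hS.le (div_nonneg ha hp0.le)
    rw [mul_div_cancel₀ _ hp0.ne'] at young
    rw [rpowProfile_of_nonneg hp.ne' hS.le]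
    linarith

lemma continuousOn_rpowProfile (hp : 1 < p) : ContinuousOn (rpowProfile p a) (Ici 0) := by
  refine ContinuousOn.congr (f := fun S => (p - 1) * S ^ p - a * S ^ (p - 1)) ?_
    fun S hS => rpowProfile_of_nonneg hp.ne' hS
  refine fun S _ => ContinuousAt.continuousWithinAt ?_
  have := Real.continuousAt_rpow_const S p (Or.inr (by linarith))
  have := Real.continuousAt_rpow_const S (p - 1) (Or.inr (by linarith))
  fun_prop

lemma tendsto_rpowProfile_atTop (hp : 1 < p) : Tendsto (rpowProfile p a) atTop atTop := by
  have hfactor : ∀ᶠ S in atTop, S ^ (p - 1) * ((p - 1) * S - a) = rpowProfile p a S := by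
    filter_upwards [eventually_gt_atTop 0] with S hS
    have hpow : S ^ p = S ^ (p - 1) * S := by
      rw [← Real.rpow_add_one hS.ne', sub_add_cancel]
    rw [rpowProfile_of_nonneg hp.ne' hS.le, hpow]
    ring
  refine Tendsto.congr' hfactor (Tendsto.atTop_mul_atTop₀ (tendsto_rpow_atTop (by linarith)) ?_)
  exact tendsto_atTop_add_const_right _ _ (tendsto_id.const_mul_atTop (by linarith))

lemma exists_rpowProfile_eq (hp : 1 < p) (ha : 0 ≤ a) {y : ℝ} (hy : -(a / p) ^ p ≤ y) :
    ∃ S, rpowProfile p a S = y := by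
  have hc : 0 ≤ a / p := div_nonneg ha (one_pos.trans hp).le
  rw [← rpowProfile_div_self hp ha] at hy
  obtain ⟨S, -, hS⟩ := intermediate_value_Ici
    ((continuousOn_rpowProfile hp).mono (Ici_subset_Ici.2 hc)) (tendsto_rpowProfile_atTop hp) hy
  exact ⟨S, hS⟩

end Profile

theorem stmt0 (p N μ : ℝ) (hp : 1 < p) (hpN : p < N)
    (μ₀ : ℝ) (hμ₀ : μ₀ = -((N - p) / p) ^ p)
    (φ : ℝ → ℝ)
    (hφ : ∀ S : ℝ, φ S = (p - 1) * |S| ^ p - (N - p) * (Real.sign S * |S| ^ (p - 1)) - μ) :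
    (∀ S : ℝ, φ ((N - p) / p) ≤ φ S) ∧
    φ ((N - p) / p) = μ₀ - μ ∧
    ((∃ S : ℝ, φ S = 0) ↔ μ₀ ≤ μ) := by
  subst hμ₀
  have ha : 0 ≤ N - p := by linarith
  have hφ' : ∀ S, φ S = rpowProfile p (N - p) S - μ := hφ
  have hmin : φ ((N - p) / p) = -((N - p) / p) ^ p - μ := by
    rw [hφ', rpowProfile_div_self hp ha]
  refine ⟨fun S => ?_, hmin, ⟨fun ⟨S, hS⟩ => ?_, fun hμ => ?_⟩⟩
  · rw [hmin, hφ']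
    linarith [neg_rpow_le_rpowProfile hp ha S]
  · rw [hφ'] at hS
    linarith [neg_rpow_le_rpowProfile hp ha S]
  · obtain ⟨S, hS⟩ := exists_rpowProfile_eq hp ha hμ
    exact ⟨S, by rw [hφ', hS, sub_self]⟩
end

section
/- Let 2 < N and μ ≥ -((N-2)/2)², and let S be a root of S² - (N-2)S - μ = 0. If u is a positive C² radial function on an interval of (0,∞) and w(r) = r^S u(r), then u satisfies -u'' - ((N-1)/r)u' + μ u/r² + r^θ u^q = 0 if and only if w satisfies -w'' - ((𝐍-1)/r)w' + r^σ w^q = 0, where 𝐍 = N - 2S and σ = θ - S(q-1). -/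
theorem stmt3 (N μ q θ S : ℝ) (hN : 2 < N) (hμ : -((N - 2) / 2) ^ 2 ≤ μ) (hq : 1 < q)
    (hS : S ^ 2 - (N - 2) * S - μ = 0)
    (a b : ℝ) (hab : 0 < a) (u : ℝ → ℝ)
    (hu : ContDiffOn ℝ 2 u (Set.Ioo a b)) (hupos : ∀ r ∈ Set.Ioo a b, 0 < u r)
    (NN σ : ℝ) (hNN : NN = N - 2 * S) (hσ : σ = θ - S * (q - 1))
    (w : ℝ → ℝ) (hw : ∀ r : ℝ, w r = r ^ S * u r) :
    (∀ r ∈ Set.Ioo a b,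
        -(deriv (deriv u) r) - ((N - 1) / r) * deriv u r + μ * u r / r ^ 2
          + r ^ θ * u r ^ q = 0) ↔
    (∀ r ∈ Set.Ioo a b,
        -(deriv (deriv w) r) - ((NN - 1) / r) * deriv w r + r ^ σ * w r ^ q = 0) := by
  have hw' : w = fun x => x ^ S * u x := funext hw
  subst hw' hNN hσ
  have hopen : IsOpen (Set.Ioo a b) := isOpen_Ioo
  have hμ' : μ = S ^ 2 - (N - 2) * S := by linarith
  have hu1 : ∀ x ∈ Set.Ioo a b, HasDerivAt u (deriv u x) x := by
    intro x hx
    exact ((hu.contDiffAt (hopen.mem_nhds hx)).differentiableAt (by norm_num)).hasDerivAt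
  have hu' : ContDiffOn ℝ 1 (deriv u) (Set.Ioo a b) :=
    hu.deriv_of_isOpen hopen (by norm_num)
  have hu2 : ∀ x ∈ Set.Ioo a b, HasDerivAt (deriv u) (deriv (deriv u) x) x := by
    intro x hx
    exact ((hu'.contDiffAt (hopen.mem_nhds hx)).differentiableAt (by norm_num)).hasDerivAt
  have hw1 : ∀ x ∈ Set.Ioo a b,
      HasDerivAt (fun x => x ^ S * u x) (S * x ^ (S - 1) * u x + x ^ S * deriv u x) x := by
    intro x hx
    have hx0 : (0:ℝ) < x := lt_trans hab hx.1
    have h1 := Real.hasDerivAt_rpow_const (p := S) (Or.inl hx0.ne')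
    exact h1.mul (hu1 x hx)
  have hderivw : ∀ x ∈ Set.Ioo a b,
      deriv (fun x => x ^ S * u x) x = S * x ^ (S - 1) * u x + x ^ S * deriv u x :=
    fun x hx => (hw1 x hx).deriv
  have key : ∀ r ∈ Set.Ioo a b,
      (-(deriv (deriv (fun x => x ^ S * u x)) r)
        - ((N - 2 * S - 1) / r) * deriv (fun x => x ^ S * u x) r
        + r ^ (θ - S * (q - 1)) * (r ^ S * u r) ^ q)
      = r ^ S * (-(deriv (deriv u) r) - ((N - 1) / r) * deriv u r + μ * u r / r ^ 2
          + r ^ θ * u r ^ q) := by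
    intro r hr
    have hr0 : (0:ℝ) < r := lt_trans hab hr.1
    have heq : deriv (fun x => x ^ S * u x)
        =ᶠ[nhds r] (fun x => S * x ^ (S - 1) * u x + x ^ S * deriv u x) := by
      filter_upwards [hopen.mem_nhds hr] with x hx using hderivw x hx
    have hg : HasDerivAt (fun x => S * x ^ (S - 1) * u x + x ^ S * deriv u x)
        ((S * ((S - 1) * r ^ (S - 1 - 1)) * u r + S * r ^ (S - 1) * deriv u r)
          + (S * r ^ (S - 1) * deriv u r + r ^ S * deriv (deriv u) r)) r := by
      have h1 := (Real.hasDerivAt_rpow_const (p := S - 1) (Or.inl hr0.ne')).const_mul S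
      have h2 := Real.hasDerivAt_rpow_const (p := S) (Or.inl hr0.ne')
      exact (h1.mul (hu1 r hr)).add (h2.mul (hu2 r hr))
    have hD2 : deriv (deriv (fun x => x ^ S * u x)) r
        = (S * ((S - 1) * r ^ (S - 1 - 1)) * u r + S * r ^ (S - 1) * deriv u r)
          + (S * r ^ (S - 1) * deriv u r + r ^ S * deriv (deriv u) r) := by
      rw [heq.deriv_eq]; exact hg.deriv
    have hP1 : r ^ (S - 1) = r ^ S / r := by
      rw [Real.rpow_sub hr0, Real.rpow_one]
    have hP2 : r ^ (S - 1 - 1) = r ^ S / r / r := by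
      rw [Real.rpow_sub hr0, Real.rpow_sub hr0, Real.rpow_one]
    have hQ : r ^ (θ - S * (q - 1)) * (r ^ S * u r) ^ q = r ^ θ * r ^ S * u r ^ q := by
      rw [Real.mul_rpow (Real.rpow_pos_of_pos hr0 S).le (hupos r hr).le,
        ← Real.rpow_mul hr0.le, ← mul_assoc, ← Real.rpow_add hr0,
        show θ - S * (q - 1) + S * q = θ + S by ring, Real.rpow_add hr0]
    have hS0 : r ^ S ≠ 0 := (Real.rpow_pos_of_pos hr0 S).ne'
    rw [hD2, hderivw r hr, hQ, hP1, hP2, hμ']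
    field_simp
    ring
  constructor <;> intro h r hr
  · rw [key r hr, h r hr, mul_zero]
  · have h2 := h r hr
    rw [key r hr] at h2
    have hr0 : (0:ℝ) < r := lt_trans hab hr.1
    have hS0 : r ^ S ≠ 0 := (Real.rpow_pos_of_pos hr0 S).ne'
    exact (mul_eq_zero.mp h2).resolve_left hS0
end

section
/- Let 1 < p < N, q > p-1, and θ = -p(N-1)/(p-1) (so θ + p < 0). Set d = ((p-1)(q-p+1)/(p(N-p))) · (p/((p-1)(q+1)))^{1/p}. Then for every c > 0, the function u(r) = (c + d r^{(p-N)/(p-1)})^{-p/(q+1-p)} is a positive solution on (0,∞) of the radial equation -(|u'|^{p-2}u')' - ((N-1)/r)|u'|^{p-2}u' + r^θ u^q = 0. -/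
/-!
Write `u = A ^ β` with `A s = c + d s ^ α`, `α = (p - N)/(p - 1)`, `β = -p/(q + 1 - p)`. Both
exponents are negative, so `u' = K s ^ (α - 1) A ^ (β - 1)` with `K = d α β > 0`, and the flux
`|u'| ^ (p - 2) u'` equals `s ^ (1 - N) K ^ (p - 1) A ^ γ`, `γ = (β - 1)(p - 1)`. The radial
operator is `r ^ (1 - N) (r ^ (N - 1) ·)'`, so it only differentiates `K ^ (p - 1) A ^ γ`. The
exponents then match those of `r ^ θ u ^ q`, and `d` is exactly the constant for which
`K ^ p = p/((p - 1)(q + 1))`, which makes the coefficients cancel.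
-/

open Real Filter Topology

lemma sign_mul_abs_rpow_of_pos {x : ℝ} (hx : 0 < x) (a : ℝ) : sign x * |x| ^ a = x ^ a := by
  rw [sign_of_pos hx, abs_of_pos hx, one_mul]

lemma mul_rpow_mul_rpow_rpow {K x y a b e : ℝ} (hK : 0 ≤ K) (hx : 0 ≤ x) (hy : 0 ≤ y) :
    (K * x ^ a * y ^ b) ^ e = K ^ e * x ^ (a * e) * y ^ (b * e) := by
  rw [mul_rpow (by positivity) (by positivity), mul_rpow hK (by positivity), rpow_mul hx,
    rpow_mul hy]

/-- The radial divergence identity `φ' + (N - 1)/r φ = r ^ (1 - N) (r ^ (N - 1) φ)'`. -/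
lemma deriv_add_div_mul_eq_of_eventuallyEq {N r Ψ' : ℝ} {φ Ψ : ℝ → ℝ} (hr : 0 < r)
    (hφ : φ =ᶠ[𝓝 r] fun s => s ^ (1 - N) * Ψ s) (hΨ : HasDerivAt Ψ Ψ' r) :
    deriv φ r + (N - 1) / r * φ r = r ^ (1 - N) * Ψ' := by
  have h : HasDerivAt (fun s => s ^ (1 - N) * Ψ s) _ r :=
    (hasDerivAt_rpow_const (Or.inl hr.ne')).mul hΨ
  rw [hφ.deriv_eq, h.deriv, hφ.eq_of_nhds, rpow_sub_one hr.ne']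
  field_simp
  ring

lemma hasDerivAt_const_add_mul_rpow_rpow {c d α β s : ℝ} (hs : 0 < s)
    (hA : 0 < c + d * s ^ α) :
    HasDerivAt (fun x => (c + d * x ^ α) ^ β)
      (d * α * β * s ^ (α - 1) * (c + d * s ^ α) ^ (β - 1)) s := by
  convert (((hasDerivAt_rpow_const (Or.inl hs.ne')).const_mul d).const_add c).rpow_const
    (p := β) (Or.inl hA.ne') using 1
  ring

lemma sign_deriv_mul_abs_deriv_rpow_eq {c d α β p N s : ℝ} (hs : 0 < s)
    (hA : 0 < c + d * s ^ α) (hK : 0 < d * α * β) (hexp : (α - 1) * (p - 1) = 1 - N) :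
    sign (deriv (fun x => (c + d * x ^ α) ^ β) s)
        * |deriv (fun x => (c + d * x ^ α) ^ β) s| ^ (p - 1)
      = s ^ (1 - N) * ((d * α * β) ^ (p - 1) * (c + d * s ^ α) ^ ((β - 1) * (p - 1))) := by
  rw [(hasDerivAt_const_add_mul_rpow_rpow hs hA).deriv,
    sign_mul_abs_rpow_of_pos (by positivity), mul_rpow_mul_rpow_rpow hK.le hs.le hA.le, hexp]
  ring

namespace HenonRadial

variable {p N q θ d α β : ℝ}

lemma d_pos (hp : 1 < p) (hpN : p < N) (hq : p - 1 < q)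
    (hd : d = (p - 1) * (q - p + 1) / (p * (N - p)) * (p / ((p - 1) * (q + 1))) ^ (1 / p)) :
    0 < d := by
  rw [hd]
  exact mul_pos (div_pos (by nlinarith) (by nlinarith))
    (rpow_pos_of_pos (div_pos (by linarith) (by nlinarith)) _)

lemma coeff_eq (hp : 1 < p) (hpN : p < N) (hq : p - 1 < q)
    (hα : α = (p - N) / (p - 1)) (hβ : β = -p / (q + 1 - p))
    (hd : d = (p - 1) * (q - p + 1) / (p * (N - p)) * (p / ((p - 1) * (q + 1))) ^ (1 / p)) :
    d * α * β = (p / ((p - 1) * (q + 1))) ^ (1 / p) := by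
  have : p - 1 ≠ 0 := by linarith
  have : q + 1 - p ≠ 0 := by linarith
  have : N - p ≠ 0 := by linarith
  have : p ≠ 0 := by linarith
  rw [hd, hα, hβ]
  field_simp
  ring

lemma coeff_rpow_mul_eq_one (hp : 1 < p) (hpN : p < N) (hq : p - 1 < q)
    (hα : α = (p - N) / (p - 1)) (hβ : β = -p / (q + 1 - p))
    (hd : d = (p - 1) * (q - p + 1) / (p * (N - p)) * (p / ((p - 1) * (q + 1))) ^ (1 / p)) :
    (d * α * β) ^ (p - 1) * (d * α * ((β - 1) * (p - 1))) = 1 := by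
  have hm : 0 < p / ((p - 1) * (q + 1)) := div_pos (by linarith) (by nlinarith)
  have hK := coeff_eq hp hpN hq hα hβ hd
  have hKp : (d * α * β) ^ (p - 1) * (d * α * β) = p / ((p - 1) * (q + 1)) := by
    rw [← rpow_add_one (hK ▸ (rpow_pos_of_pos hm _).ne'), sub_add_cancel, hK,
      ← rpow_mul hm.le, one_div_mul_cancel (by linarith), rpow_one]
  have hβ0 : β ≠ 0 := by rw [hβ]; exact div_ne_zero (by linarith) (by linarith)
  calc _ = (d * α * β) ^ (p - 1) * (d * α * β) * ((β - 1) * (p - 1) / β) := by field_simp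
    -- `(β - 1)/β = (q + 1)/p`
    _ = 1 := by
      have : q + 1 - p ≠ 0 := by linarith
      have : p - 1 ≠ 0 := by linarith
      have : q + 1 ≠ 0 := by linarith
      rw [hKp, hβ]
      field_simp
      ring

lemma flux_exponent (hp : 1 < p) (hα : α = (p - N) / (p - 1)) :
    (α - 1) * (p - 1) = 1 - N := by
  have : p - 1 ≠ 0 := by linarith
  rw [hα]; field_simp; ring

lemma weight_exponent (hp : 1 < p) (hα : α = (p - N) / (p - 1))
    (hθ : θ = -p * (N - 1) / (p - 1)) : 1 - N + (α - 1) = θ := by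
  have : p - 1 ≠ 0 := by linarith
  rw [hα, hθ]; field_simp; ring

lemma source_exponent (hq : p - 1 < q) (hβ : β = -p / (q + 1 - p)) :
    (β - 1) * (p - 1) - 1 = β * q := by
  have : q + 1 - p ≠ 0 := by linarith
  rw [hβ]; field_simp; ring

lemma rpow_mul_deriv_eq_source (hp : 1 < p) (hpN : p < N) (hq : p - 1 < q)
    (hθ : θ = -p * (N - 1) / (p - 1))
    (hd : d = (p - 1) * (q - p + 1) / (p * (N - p)) * (p / ((p - 1) * (q + 1))) ^ (1 / p))
    (hα : α = (p - N) / (p - 1)) (hβ : β = -p / (q + 1 - p)) {r A : ℝ} (hr : 0 < r)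
    (hA : 0 ≤ A) :
    r ^ (1 - N) * ((d * α * β) ^ (p - 1) *
      (d * α * ((β - 1) * (p - 1)) * r ^ (α - 1) * A ^ ((β - 1) * (p - 1) - 1)))
      = r ^ θ * (A ^ β) ^ q :=
  calc _ = (d * α * β) ^ (p - 1) * (d * α * ((β - 1) * (p - 1)))
        * (r ^ (1 - N) * r ^ (α - 1)) * A ^ ((β - 1) * (p - 1) - 1) := by ring
    _ = _ := by
      rw [coeff_rpow_mul_eq_one hp hpN hq hα hβ hd, ← rpow_add hr, weight_exponent hp hα hθ,
        source_exponent hq hβ, rpow_mul hA, one_mul]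

end HenonRadial

theorem stmt12 (p N q : ℝ) (hp : 1 < p) (hpN : p < N) (hq : p - 1 < q)
    (θ d : ℝ) (hθ : θ = -p * (N - 1) / (p - 1))
    (hd : d = (p - 1) * (q - p + 1) / (p * (N - p)) * (p / ((p - 1) * (q + 1))) ^ (1 / p))
    (c : ℝ) (hc : 0 < c)
    (u : ℝ → ℝ)
    (hu : ∀ r : ℝ, u r = (c + d * r ^ ((p - N) / (p - 1))) ^ (-p / (q + 1 - p))) :
    ∀ r : ℝ, 0 < r →
      0 < u r ∧
      -(deriv (fun s : ℝ => Real.sign (deriv u s) * |deriv u s| ^ (p - 1)) r)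
        - ((N - 1) / r) * (Real.sign (deriv u r) * |deriv u r| ^ (p - 1))
        + r ^ θ * u r ^ q = 0 := by
  intro r hr
  obtain rfl : u = _ := funext hu
  set α := (p - N) / (p - 1) with hα
  set β := -p / (q + 1 - p) with hβ
  have hK : 0 < d * α * β := by
    rw [HenonRadial.coeff_eq hp hpN hq hα hβ hd]
    exact rpow_pos_of_pos (div_pos (by linarith) (by nlinarith)) _
  have hA : ∀ s, 0 < s → 0 < c + d * s ^ α := fun s hs => by
    have := HenonRadial.d_pos hp hpN hq hd
    positivity
  have hdiv := deriv_add_div_mul_eq_of_eventuallyEq hr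
    (eventually_of_mem (Ioi_mem_nhds hr) fun s hs =>
      sign_deriv_mul_abs_deriv_rpow_eq hs (hA s hs) hK (HenonRadial.flux_exponent hp hα))
    ((hasDerivAt_const_add_mul_rpow_rpow hr (hA r hr)).const_mul ((d * α * β) ^ (p - 1)))
  refine ⟨rpow_pos_of_pos (hA r hr) _, ?_⟩
  linear_combination
    -hdiv - HenonRadial.rpow_mul_deriv_eq_source hp hpN hq hθ hd hα hβ hr (hA r hr).le
end

section
/- Let N > 2, q > 1, μ = μ₀ = -((N-2)/2)² and let θ be chosen so that γ = (2+θ)/(q-1) = (N-2)/2, i.e. θ + 2 = (q-1)(N-2)/2. Then for every R > 0 and each sign choice, the function u(r) = (2(q+1)/(q-1)²)^{1/(q-1)} · r^{(2-N)/2} (ln r ± ln R)^{-2/(q-1)} is a positive solution of -u'' - ((N-1)/r)u' + μ₀ u/r² + r^θ u^q = 0 on the interval where ln r ± ln R > 0. -/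
open Real Filter

theorem stmt13 (N q θ R ε : ℝ) (hN : 2 < N) (hq : 1 < q) (hR : 0 < R)
    (hε : ε = 1 ∨ ε = -1)
    (hθ : (θ + 2) / (q - 1) = (N - 2) / 2)
    (μ₀ : ℝ) (hμ₀ : μ₀ = -((N - 2) / 2) ^ 2)
    (u : ℝ → ℝ)
    (hu : ∀ r : ℝ, u r = (2 * (q + 1) / (q - 1) ^ 2) ^ (1 / (q - 1)) * r ^ ((2 - N) / 2) *
        (Real.log r + ε * Real.log R) ^ (-2 / (q - 1))) :
    ∀ r : ℝ, 0 < r → 0 < Real.log r + ε * Real.log R →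
      0 < u r ∧
      -(deriv (deriv u) r) - ((N - 1) / r) * deriv u r + μ₀ * u r / r ^ 2
        + r ^ θ * u r ^ q = 0 := by
  have hq1 : (0:ℝ) < q - 1 := by linarith
  set a : ℝ := (2 - N) / 2 with ha
  set b : ℝ := -2 / (q - 1) with hb
  set c : ℝ := ε * Real.log R with hc
  set K : ℝ := 2 * (q + 1) / (q - 1) ^ 2 with hKdef
  set C : ℝ := K ^ (1 / (q - 1)) with hCdef
  have hKpos : 0 < K := by rw [hKdef]; positivity
  have hCpos : 0 < C := Real.rpow_pos_of_pos hKpos _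
  have hufun : u = fun s : ℝ => C * s ^ a * (Real.log s + c) ^ b := funext hu
  -- first derivative on the domain
  have key1 : ∀ s : ℝ, 0 < s → 0 < Real.log s + c →
      HasDerivAt u (C * (a * s ^ (a-1) * (Real.log s + c) ^ b
        + s ^ a * (s⁻¹ * b * (Real.log s + c) ^ (b-1)))) s := by
    intro s hs hLs
    have h1 : HasDerivAt (fun x : ℝ => x ^ a) (a * s ^ (a-1)) s :=
      Real.hasDerivAt_rpow_const (Or.inl hs.ne')
    have hlog : HasDerivAt (fun x : ℝ => Real.log x + c) s⁻¹ s :=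
      (Real.hasDerivAt_log hs.ne').add_const c
    have h2 : HasDerivAt (fun x : ℝ => (Real.log x + c) ^ b)
        (s⁻¹ * b * (Real.log s + c) ^ (b-1)) s := hlog.rpow_const (Or.inl hLs.ne')
    have h3 := (h1.mul h2).const_mul C
    rw [hufun]
    simpa [mul_assoc] using h3
  intro r hr hL
  have hupos : 0 < u r := by
    rw [hu r]
    exact mul_pos (mul_pos hCpos (Real.rpow_pos_of_pos hr _)) (Real.rpow_pos_of_pos hL _)
  refine ⟨hupos, ?_⟩
  -- eventual form of deriv u
  have hev : ∀ᶠ s in nhds r, 0 < s ∧ 0 < Real.log s + c := by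
    have h1 : ∀ᶠ s in nhds r, 0 < s := eventually_gt_nhds hr
    have hcont : ContinuousAt (fun s : ℝ => Real.log s + c) r :=
      (Real.continuousAt_log hr.ne').add continuousAt_const
    have h2 : ∀ᶠ s in nhds r, 0 < Real.log s + c :=
      hcont.eventually_mem (Ioi_mem_nhds hL)
    exact h1.and h2
  have hderiv_ev : deriv u =ᶠ[nhds r] fun s : ℝ =>
      C * (a * s ^ (a-1) * (Real.log s + c) ^ b
        + s ^ a * (s⁻¹ * b * (Real.log s + c) ^ (b-1))) :=
    hev.mono fun s hs => (key1 s hs.1 hs.2).deriv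
  have hd1 : deriv u r = C * (a * r ^ (a-1) * (Real.log r + c) ^ b
      + r ^ a * (r⁻¹ * b * (Real.log r + c) ^ (b-1))) := (key1 r hr hL).deriv
  -- second derivative
  have hlog : HasDerivAt (fun x : ℝ => Real.log x + c) r⁻¹ r :=
    (Real.hasDerivAt_log hr.ne').add_const c
  have hE0 : HasDerivAt (fun x : ℝ => (Real.log x + c) ^ b)
      (r⁻¹ * b * (Real.log r + c) ^ (b-1)) r := hlog.rpow_const (Or.inl hL.ne')
  have hE1 : HasDerivAt (fun x : ℝ => (Real.log x + c) ^ (b-1))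
      (r⁻¹ * (b-1) * (Real.log r + c) ^ (b-1-1)) r := hlog.rpow_const (Or.inl hL.ne')
  have hp1 : HasDerivAt (fun x : ℝ => x ^ (a-1)) ((a-1) * r ^ (a-1-1)) r :=
    Real.hasDerivAt_rpow_const (Or.inl hr.ne')
  have hp0 : HasDerivAt (fun x : ℝ => x ^ a) (a * r ^ (a-1)) r :=
    Real.hasDerivAt_rpow_const (Or.inl hr.ne')
  have hinv : HasDerivAt (fun x : ℝ => x⁻¹) (-(r ^ 2)⁻¹) r := hasDerivAt_inv hr.ne'
  have hf1 : HasDerivAt (fun x : ℝ => a * x ^ (a-1) * (Real.log x + c) ^ b)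
      (a * ((a-1) * r ^ (a-1-1) * (Real.log r + c) ^ b
        + r ^ (a-1) * (r⁻¹ * b * (Real.log r + c) ^ (b-1)))) r := by
    have := ((hp1.mul hE0).const_mul a)
    simpa [mul_assoc] using this
  have hg : HasDerivAt (fun x : ℝ => x⁻¹ * b * (Real.log x + c) ^ (b-1))
      ((-(r ^ 2)⁻¹ * b) * (Real.log r + c) ^ (b-1)
        + r⁻¹ * b * (r⁻¹ * (b-1) * (Real.log r + c) ^ (b-1-1))) r :=
    (hinv.mul_const b).mul hE1
  have hf2 : HasDerivAt (fun x : ℝ => x ^ a * (x⁻¹ * b * (Real.log x + c) ^ (b-1)))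
      (a * r ^ (a-1) * (r⁻¹ * b * (Real.log r + c) ^ (b-1))
        + r ^ a * ((-(r ^ 2)⁻¹ * b) * (Real.log r + c) ^ (b-1)
          + r⁻¹ * b * (r⁻¹ * (b-1) * (Real.log r + c) ^ (b-1-1)))) r := hp0.mul hg
  have hW : HasDerivAt (fun s : ℝ =>
      C * (a * s ^ (a-1) * (Real.log s + c) ^ b
        + s ^ a * (s⁻¹ * b * (Real.log s + c) ^ (b-1))))
      (C * ((a * ((a-1) * r ^ (a-1-1) * (Real.log r + c) ^ b
        + r ^ (a-1) * (r⁻¹ * b * (Real.log r + c) ^ (b-1))))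
        + (a * r ^ (a-1) * (r⁻¹ * b * (Real.log r + c) ^ (b-1))
        + r ^ a * ((-(r ^ 2)⁻¹ * b) * (Real.log r + c) ^ (b-1)
          + r⁻¹ * b * (r⁻¹ * (b-1) * (Real.log r + c) ^ (b-1-1)))))) r :=
    (hf1.add hf2).const_mul C
  have hd2 : deriv (deriv u) r = C * ((a * ((a-1) * r ^ (a-1-1) * (Real.log r + c) ^ b
        + r ^ (a-1) * (r⁻¹ * b * (Real.log r + c) ^ (b-1))))
        + (a * r ^ (a-1) * (r⁻¹ * b * (Real.log r + c) ^ (b-1))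
        + r ^ a * ((-(r ^ 2)⁻¹ * b) * (Real.log r + c) ^ (b-1)
          + r⁻¹ * b * (r⁻¹ * (b-1) * (Real.log r + c) ^ (b-1-1))))) := by
    rw [hderiv_ev.deriv_eq]
    exact hW.deriv
  -- exponent arithmetic
  rw [div_eq_iff hq1.ne'] at hθ
  have hexp1 : θ + a * q = a - 2 := by rw [ha]; nlinarith [hθ]
  have hexp2 : b * q = b - 2 := by rw [hb]; field_simp; ring
  -- rewrite the nonlinear term
  have hEpos := hL
  have hCq : C ^ q = C * (b * (b - 1)) := by
    have h2 : (1 / (q - 1)) * (q - 1) = 1 := by field_simp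
    have h3 : C ^ (q - 1) = K := by
      rw [hCdef, ← Real.rpow_mul hKpos.le, h2, Real.rpow_one]
    have h4 : C ^ q = C ^ (q - 1) * C := by
      rw [← Real.rpow_add_one hCpos.ne' (q - 1)]; congr 1; ring
    rw [h4, h3, hKdef, hb]
    field_simp
    ring
  have hnl : r ^ θ * (C * r ^ a * (Real.log r + c) ^ b) ^ q
      = C * (b * (b - 1)) * (r ^ (a - 2) * (Real.log r + c) ^ (b - 2)) := by
    rw [Real.mul_rpow (by positivity) (Real.rpow_pos_of_pos hL b).le,
      Real.mul_rpow hCpos.le (Real.rpow_pos_of_pos hr a).le,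
      ← Real.rpow_mul hr.le, ← Real.rpow_mul hL.le, hexp2, hCq]
    have hX : r ^ θ * r ^ (a * q) = r ^ (a - 2) := by rw [← Real.rpow_add hr, hexp1]
    linear_combination (C * (b * (b - 1)) * (Real.log r + c) ^ (b - 2)) * hX
  rw [hd2, hd1, hu r, hnl]
  rw [show b - 1 - 1 = b - 2 by ring, show a - 1 - 1 = a - 2 by ring]
  have hP1 : r ^ (a - 1) = r ^ (a - 2) * r := by
    rw [← Real.rpow_add_one hr.ne']; congr 1; ring
  have hP0 : r ^ a = r ^ (a - 2) * r * r := by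
    rw [← Real.rpow_add_one hr.ne', ← Real.rpow_add_one hr.ne']; congr 1; ring
  rw [hP1, hP0]
  simp only [hμ₀, ha, hb]
  field_simp
  ring
end

section
/- Let p > 2, k > 0, and let G : [t₀, T) → (0,∞) be a C² function with G, G_t → 0 as t → t₀⁺ and satisfying (k/2) G^{1/(p-1)} ≤ G_tt + (N-p)G_t ≤ 2k G^{1/(p-1)} with G_t > 0 on the interval, and such that the energy (G_t²/2 - 2k((p-1)/p)G^{p/(p-1)}) is nonincreasing and tends to 0 at the left endpoint. Then G_t ≤ c G^{p/(2(p-1))} for c = 2(k(p-1)/p)^{1/2}, hence (2(p-1)/(p-2)) G^{(p-2)/(2(p-1))} - ct is nonincreasing; in particular G cannot be defined and positive on an interval unbounded to the left (the maximal existence interval has a finite left endpoint). -/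
theorem stmt19 (p N k t₀ T c : ℝ) (hp : 2 < p) (hk : 0 < k) (hpN : p < N)
    (htT : t₀ < T) (hc : c = 2 * Real.sqrt (k * (p - 1) / p))
    (G : ℝ → ℝ) (hG : ContDiffOn ℝ 2 G (Set.Ioo t₀ T))
    (hGpos : ∀ t ∈ Set.Ioo t₀ T, 0 < G t)
    (hG' : ∀ t ∈ Set.Ioo t₀ T, 0 < deriv G t)
    (hineq : ∀ t ∈ Set.Ioo t₀ T,
        k / 2 * G t ^ (1 / (p - 1)) ≤ deriv (deriv G) t + (N - p) * deriv G t ∧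
        deriv (deriv G) t + (N - p) * deriv G t ≤ 2 * k * G t ^ (1 / (p - 1)))
    (hGlim : Filter.Tendsto G (nhdsWithin t₀ (Set.Ioi t₀)) (nhds 0))
    (hG'lim : Filter.Tendsto (deriv G) (nhdsWithin t₀ (Set.Ioi t₀)) (nhds 0))
    (hmono : AntitoneOn
        (fun t => (deriv G t) ^ 2 / 2 - 2 * k * ((p - 1) / p) * G t ^ (p / (p - 1)))
        (Set.Ioo t₀ T))
    (hHlim : Filter.Tendsto
        (fun t => (deriv G t) ^ 2 / 2 - 2 * k * ((p - 1) / p) * G t ^ (p / (p - 1)))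
        (nhdsWithin t₀ (Set.Ioi t₀)) (nhds 0)) :
    (∀ t ∈ Set.Ioo t₀ T, deriv G t ≤ c * G t ^ (p / (2 * (p - 1)))) ∧
    AntitoneOn (fun t => 2 * (p - 1) / (p - 2) * G t ^ ((p - 2) / (2 * (p - 1))) - c * t)
        (Set.Ioo t₀ T) := by
  have hp1 : (0:ℝ) < p - 1 := by linarith
  have hp2 : (0:ℝ) < p - 2 := by linarith
  have hx : (0:ℝ) ≤ k * (p - 1) / p := by positivity
  have hcpos : 0 ≤ c := by rw [hc]; positivity
  have hc2 : c ^ 2 = 4 * (k * (p - 1) / p) := by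
    rw [hc, mul_pow, Real.sq_sqrt hx]; ring
  -- Part 1
  have part1 : ∀ t ∈ Set.Ioo t₀ T, deriv G t ≤ c * G t ^ (p / (2 * (p - 1))) := by
    intro t ht
    have hGt := hGpos t ht
    have hG't := hG' t ht
    have hHle : (deriv G t) ^ 2 / 2 - 2 * k * ((p - 1) / p) * G t ^ (p / (p - 1)) ≤ 0 := by
      refine ge_of_tendsto hHlim ?_
      filter_upwards [Ioo_mem_nhdsGT_of_mem (Set.mem_Ico.mpr ⟨le_refl t₀, ht.1⟩)] with s hs
      exact hmono ⟨hs.1, hs.2.trans ht.2⟩ ht hs.2.le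
    have hsq : (c * G t ^ (p / (2 * (p - 1)))) ^ 2 = c ^ 2 * G t ^ (p / (p - 1)) := by
      have h2 : p / (2 * (p - 1)) * 2 = p / (p - 1) := by
        field_simp
      rw [mul_pow, ← Real.rpow_natCast (G t ^ _) 2, ← Real.rpow_mul hGt.le]
      norm_num [h2]
    have key : (deriv G t) ^ 2 ≤ (c * G t ^ (p / (2 * (p - 1)))) ^ 2 := by
      rw [hsq, hc2,
        show (4:ℝ) * (k * (p - 1) / p) = 2 * (2 * k * ((p - 1) / p)) by ring]
      linarith
    have hb : 0 ≤ c * G t ^ (p / (2 * (p - 1))) := by positivity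
    exact le_of_pow_le_pow_left₀ two_ne_zero hb key
  refine ⟨part1, ?_⟩
  -- Part 2
  have hdiff : DifferentiableOn ℝ G (Set.Ioo t₀ T) :=
    hG.differentiableOn (by norm_num)
  refine antitoneOn_of_deriv_nonpos (convex_Ioo _ _) ?_ ?_ ?_
  · refine ContinuousOn.sub ?_ (by fun_prop)
    refine ContinuousOn.mul continuousOn_const ?_
    exact (hG.continuousOn).rpow_const (fun t ht => Or.inl (hGpos t ht).ne')
  · rw [interior_Ioo]
    intro t ht
    have hGd : HasDerivAt G (deriv G t) t :=
      ((hdiff t ht).differentiableAt (isOpen_Ioo.mem_nhds ht)).hasDerivAt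
    have hF : HasDerivAt
        (fun t => 2 * (p - 1) / (p - 2) * G t ^ ((p - 2) / (2 * (p - 1))) - c * t)
        (2 * (p - 1) / (p - 2) *
          (deriv G t * ((p - 2) / (2 * (p - 1))) * G t ^ ((p - 2) / (2 * (p - 1)) - 1))
          - c * 1) t :=
      ((hGd.rpow_const (Or.inl (hGpos t ht).ne')).const_mul _).sub
        ((hasDerivAt_id t).const_mul c)
    exact hF.differentiableAt.differentiableWithinAt
  · rw [interior_Ioo]
    intro t ht
    have hGt := hGpos t ht
    have hG't := hG' t ht
    have hGd : HasDerivAt G (deriv G t) t :=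
      ((hdiff t ht).differentiableAt (isOpen_Ioo.mem_nhds ht)).hasDerivAt
    have hF : HasDerivAt
        (fun t => 2 * (p - 1) / (p - 2) * G t ^ ((p - 2) / (2 * (p - 1))) - c * t)
        (2 * (p - 1) / (p - 2) *
          (deriv G t * ((p - 2) / (2 * (p - 1))) * G t ^ ((p - 2) / (2 * (p - 1)) - 1))
          - c * 1) t :=
      ((hGd.rpow_const (Or.inl hGt.ne')).const_mul _).sub ((hasDerivAt_id t).const_mul c)
    rw [hF.deriv]
    have hA : 2 * (p - 1) / (p - 2) * ((p - 2) / (2 * (p - 1))) = 1 := by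
      field_simp
    have hexp : (p - 2) / (2 * (p - 1)) - 1 = -(p / (2 * (p - 1))) := by
      field_simp; ring
    have hkey := part1 t ht
    have hmul : deriv G t * G t ^ ((p - 2) / (2 * (p - 1)) - 1) ≤ c := by
      have hGpow : 0 < G t ^ ((p - 2) / (2 * (p - 1)) - 1) := Real.rpow_pos_of_pos hGt _
      have h3 := mul_le_mul_of_nonneg_right hkey hGpow.le
      calc deriv G t * G t ^ ((p - 2) / (2 * (p - 1)) - 1)
          ≤ c * G t ^ (p / (2 * (p - 1))) * G t ^ ((p - 2) / (2 * (p - 1)) - 1) := h3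
        _ = c := by
            rw [mul_assoc, ← Real.rpow_add hGt]
            rw [show p / (2 * (p - 1)) + ((p - 2) / (2 * (p - 1)) - 1) = 0 by field_simp; ring,
              Real.rpow_zero, mul_one]
    nlinarith [hmul]
end
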